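/- arXiv:2604.17032 — 5 statements merged into one kernel-verified Lean document; each statement's English description precedes it below -/
import Mathlib

section
/- Let ι be a finite nonempty type and let C ⊆ ℝ × (ι → ℝ) be a nonempty, bounded, convex set (the set of achievable (reward, constraint-cost) pairs). Assume Slater's condition: there exists (r₀, c₀) ∈ C with c₀ i < 0 for every i. Define the primal optimal value P* := sSup {r : ℝ | ∃ c, (r, c) ∈ C ∧ ∀ i, c i ≤ 0} and, for each λ : ι → ℝ with λ i ≥ 0 for all i, the dual function d(λ) := sSup {r − ∑ i, λ i * c i | (r, c) ∈ C}. Then strong duality holds: ⨅ over {λ : ι → ℝ | ∀ i, λ i ≥ 0} of d(λ) equals P*. -/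
/-!
Weak duality holds termwise: at a feasible point `∑ λᵢ cᵢ ≤ 0`. For the converse, separate `C`
from the open convex set `O` of points that beat `P*` strictly while satisfying every constraint
strictly. The separating functional `(r, c) ↦ α r + ∑ βᵢ cᵢ` is bounded above on `O`, which forces
`α ≤ 0 ≤ βᵢ` and `α P* ≤ inf_C f`; Slater's point forces `α ≠ 0`, and then `λ = β / (-α)`
satisfies `d(λ) ≤ P*`.
-/

open Filter Topology

lemma nonpos_of_forall_pos_add_mul_le {a b K : ℝ} (h : ∀ t : ℝ, 0 < t → a + t * b ≤ K) :
    b ≤ 0 := by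
  by_contra! hb
  have hlim : Tendsto (fun t => a + t * b) atTop atTop :=
    tendsto_atTop_add_const_left _ a (tendsto_id.atTop_mul_const hb)
  obtain ⟨t, ht, hKt⟩ := ((eventually_gt_atTop 0).and (hlim.eventually_gt_atTop K)).exists
  linarith [h t ht]

lemma le_of_forall_pos_add_mul_le {a b K : ℝ} (h : ∀ t : ℝ, 0 < t → a + t * b ≤ K) : a ≤ K := by
  have hcont : Continuous fun t : ℝ => a + t * b := by fun_prop
  have hlim : Tendsto (fun t => a + t * b) (𝓝[>] 0) (𝓝 a) := by
    simpa using (hcont.tendsto 0).mono_left nhdsWithin_le_nhds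
  exact le_of_tendsto hlim (eventually_nhdsWithin_of_forall h)

lemma LinearMap.map_nonpos_and_map_le_of_forall_map_add_smul_le {E : Type*} [AddCommGroup E]
    [Module ℝ E] (f : E →ₗ[ℝ] ℝ) {x v : E} {K : ℝ} (h : ∀ t : ℝ, 0 < t → f (x + t • v) ≤ K) :
    f v ≤ 0 ∧ f x ≤ K := by
  simp only [map_add, map_smul, smul_eq_mul] at h
  exact ⟨nonpos_of_forall_pos_add_mul_le h, le_of_forall_pos_add_mul_le h⟩

lemma bddAbove_image_of_isBounded {E : Type*} [PseudoMetricSpace E] [ProperSpace E] {s : Set E}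
    (hs : Bornology.IsBounded s) {f : E → ℝ} (hf : Continuous f) : BddAbove (f '' s) :=
  (hs.isCompact_closure.bddAbove_image hf.continuousOn).mono (Set.image_mono subset_closure)

lemma ContinuousLinearMap.apply_prod_pi {ι : Type*} [Fintype ι] [DecidableEq ι]
    (f : (ℝ × (ι → ℝ)) →L[ℝ] ℝ) (p : ℝ × (ι → ℝ)) :
    f p = p.1 * f (1, 0) + ∑ i, p.2 i * f (0, Pi.single i 1) := by
  have hsplit : p = p.1 • ((1 : ℝ), (0 : ι → ℝ)) + ((0 : ℝ), p.2) := by ext <;> simp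
  conv_lhs => rw [hsplit, map_add, map_smul, smul_eq_mul]
  congr 1
  have hg := (f.comp (ContinuousLinearMap.inr ℝ ℝ (ι → ℝ))).toLinearMap.pi_apply_eq_sum_univ p.2
  refine hg.trans (Finset.sum_congr rfl fun i _ => ?_)
  simp only [ContinuousLinearMap.coe_coe, ContinuousLinearMap.comp_apply,
    ContinuousLinearMap.inr_apply, smul_eq_mul]
  congr 3
  ext j
  simp [Pi.single_apply, eq_comm]

lemma bddAbove_lagrangian_of_isBounded {ι : Type*} [Fintype ι] {C : Set (ℝ × (ι → ℝ))}
    (hbd : Bornology.IsBounded C) (lam : ι → ℝ) :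
    BddAbove {v : ℝ | ∃ p ∈ C, v = p.1 - ∑ i, lam i * p.2 i} :=
  (bddAbove_image_of_isBounded hbd (f := fun p => p.1 - ∑ i, lam i * p.2 i)
    (by fun_prop)).mono <| by
    rintro _ ⟨p, hp, rfl⟩
    exact ⟨p, hp, rfl⟩

theorem sSup_feasible_le_sSup_lagrangian {ι : Type*} [Fintype ι] {C : Set (ℝ × (ι → ℝ))}
    (hfeas : {r : ℝ | ∃ c, (r, c) ∈ C ∧ ∀ i, c i ≤ 0}.Nonempty) {lam : ι → ℝ}
    (hbdd : BddAbove {v : ℝ | ∃ p ∈ C, v = p.1 - ∑ i, lam i * p.2 i}) (hlam : ∀ i, 0 ≤ lam i) :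
    sSup {r : ℝ | ∃ c, (r, c) ∈ C ∧ ∀ i, c i ≤ 0}
      ≤ sSup {v : ℝ | ∃ p ∈ C, v = p.1 - ∑ i, lam i * p.2 i} := by
  refine csSup_le hfeas fun r ⟨c, hc, hc_nonpos⟩ => ?_
  have hpenalty : ∑ i, lam i * c i ≤ 0 :=
    Finset.sum_nonpos fun i _ => mul_nonpos_of_nonneg_of_nonpos (hlam i) (hc_nonpos i)
  exact (le_sub_self_iff r |>.2 hpenalty).trans (le_csSup hbdd ⟨(r, c), hc, rfl⟩)

theorem exists_lagrange_multiplier {ι : Type*} [Fintype ι] {C : Set (ℝ × (ι → ℝ))}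
    (hconv : Convex ℝ C)
    (slater : ∃ p ∈ C, ∀ i, p.2 i < 0) {P : ℝ} (hP : ∀ p ∈ C, (∀ i, p.2 i ≤ 0) → p.1 ≤ P) :
    ∃ lam : ι → ℝ, (∀ i, 0 ≤ lam i) ∧ ∀ p ∈ C, p.1 - ∑ i, lam i * p.2 i ≤ P := by
  classical
  obtain ⟨p₀, hp₀C, hp₀⟩ := slater
  set O : Set (ℝ × (ι → ℝ)) := Set.Ioi P ×ˢ Set.univ.pi fun _ => Set.Iio 0
  have hO_conv : Convex ℝ O := (convex_Ioi P).prod (convex_pi fun _ _ => convex_Iio 0)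
  have hO_open : IsOpen O :=
    isOpen_Ioi.prod (isOpen_set_pi Set.finite_univ fun _ _ => isOpen_Iio)
  have hdisj : Disjoint O C := Set.disjoint_left.2 fun p hpO hpC =>
    (Set.mem_Ioi.1 hpO.1).not_ge (hP p hpC fun i => (hpO.2 i trivial).le)
  obtain ⟨f, u, hfO, hfC⟩ := geometric_hahn_banach_open hO_conv hO_open hconv hdisj
  have hray : ∀ x v : ℝ × (ι → ℝ), (∀ t : ℝ, 0 < t → x + t • v ∈ O) → f v ≤ 0 ∧ f x ≤ u :=
    fun x v hxv => f.toLinearMap.map_nonpos_and_map_le_of_forall_map_add_smul_le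
      fun t ht => (hfO _ (hxv t ht)).le
  have hα : f (1, 0) ≤ 0 := (hray (P + 1, -1) (1, 0) fun t ht =>
    ⟨by simp; linarith, fun i _ => by simp⟩).1
  have hβ (i : ι) : 0 ≤ f (0, Pi.single i 1) := by
    have := (hray (P + 1, -1) (-(0, Pi.single i 1)) fun t ht =>
      ⟨by simp, fun j _ => by by_cases hj : j = i <;> simp [hj]; linarith⟩).1
    rwa [map_neg, neg_nonpos] at this
  have hu : P * f (1, 0) ≤ u := by
    have := (hray (P, 0) (1, -1) fun t ht => ⟨by simp; linarith, fun i _ => by simpa⟩).2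
    simpa [f.apply_prod_pi (P, 0)] using this
  -- If `f (1, 0) = 0`, `f` cannot tell Slater's point from its copy with reward `P + 1` in `O`.
  have hα_ne : f (1, 0) ≠ 0 := fun hα0 => by
    have h₁ := hfO (P + 1, p₀.2) ⟨by simp, fun i _ => hp₀ i⟩
    have h₂ := hfC p₀ hp₀C
    rw [f.apply_prod_pi, hα0] at h₁ h₂
    simp only [mul_zero, zero_add] at h₁ h₂
    linarith
  have hneg : 0 < -f (1, 0) := neg_pos.2 (hα.lt_of_ne hα_ne)
  refine ⟨fun i => f (0, Pi.single i 1) / -f (1, 0), fun i => div_nonneg (hβ i) hneg.le,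
    fun p hp => ?_⟩
  have hfp := hfC p hp
  rw [f.apply_prod_pi] at hfp
  have hsum : ∑ i, f (0, Pi.single i 1) / -f (1, 0) * p.2 i
      = (∑ i, p.2 i * f (0, Pi.single i 1)) / -f (1, 0) := by
    rw [Finset.sum_div]
    exact Finset.sum_congr rfl fun i _ => by ring
  rw [hsum, sub_le_iff_le_add, ← sub_le_iff_le_add', le_div_iff₀ hneg]
  nlinarith

theorem strong_duality_achievable_set_general
    {ι : Type*} [Fintype ι]
    (C : Set (ℝ × (ι → ℝ)))
    (hbd : Bornology.IsBounded C)
    (hconv : Convex ℝ C)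
    (slater : ∃ p ∈ C, ∀ i, p.2 i < 0) :
    (⨅ lam : {l : ι → ℝ // ∀ i, 0 ≤ l i},
        sSup {v : ℝ | ∃ p ∈ C, v = p.1 - ∑ i, lam.1 i * p.2 i})
      = sSup {r : ℝ | ∃ c, (r, c) ∈ C ∧ ∀ i, c i ≤ 0} := by
  obtain ⟨p₀, hp₀C, hp₀⟩ := slater
  have hprimal : BddAbove {r : ℝ | ∃ c, (r, c) ∈ C ∧ ∀ i, c i ≤ 0} :=
    (bddAbove_image_of_isBounded hbd continuous_fst).mono <| by
      rintro r ⟨c, hc, -⟩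
      exact ⟨_, hc, rfl⟩
  have hweak (lam : {l : ι → ℝ // ∀ i, 0 ≤ l i}) :=
    sSup_feasible_le_sSup_lagrangian ⟨p₀.1, p₀.2, hp₀C, fun i => (hp₀ i).le⟩
      (bddAbove_lagrangian_of_isBounded hbd lam.1) lam.2
  obtain ⟨lam, hlam, hlag⟩ := exists_lagrange_multiplier hconv ⟨p₀, hp₀C, hp₀⟩
    fun p hp hfeas => le_csSup hprimal ⟨p.2, hp, hfeas⟩
  have hstrong : sSup {v : ℝ | ∃ p ∈ C, v = p.1 - ∑ i, lam i * p.2 i}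
      ≤ sSup {r : ℝ | ∃ c, (r, c) ∈ C ∧ ∀ i, c i ≤ 0} :=
    csSup_le ⟨_, p₀, hp₀C, rfl⟩ fun v ⟨p, hp, hv⟩ => hv ▸ hlag p hp
  have : Nonempty {l : ι → ℝ // ∀ i, 0 ≤ l i} := ⟨⟨lam, hlam⟩⟩
  exact le_antisymm (ciInf_le_of_le ⟨_, Set.forall_mem_range.2 hweak⟩ ⟨lam, hlam⟩ hstrong)
    (le_ciInf hweak)

/-- Strong duality for the constrained problem over a nonempty,
bounded, convex achievable set `C ⊆ ℝ × (ι → ℝ)` under Slater's condition. -/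
theorem strong_duality_achievable_set
    {ι : Type*} [Fintype ι] [Nonempty ι]
    (C : Set (ℝ × (ι → ℝ)))
    (hne : C.Nonempty)
    (hbd : Bornology.IsBounded C)
    (hconv : Convex ℝ C)
    (slater : ∃ p ∈ C, ∀ i, p.2 i < 0) :
    (⨅ lam : {l : ι → ℝ // ∀ i, 0 ≤ l i},
        sSup {v : ℝ | ∃ p ∈ C, v = p.1 - ∑ i, lam.1 i * p.2 i})
      = sSup {r : ℝ | ∃ c, (r, c) ∈ C ∧ ∀ i, c i ≤ 0} :=
  strong_duality_achievable_set_general C hbd hconv slater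
end

section
/- Assume the dual functions satisfy strong duality for the standard Lagrangian: ⨅ over {(λ, ν) | ∀ i, λ i ≥ 0 ∧ ∀ k, ν k ≥ 0} of d(λ, ν) = P*. Then for every penalty parameter ρ ≥ 0, the augmented dual attains the same value: ⨅ over {(λ, ν) | ∀ i, λ i ≥ 0 ∧ ∀ k, ν k ≥ 0} of d_ρ(λ, ν) = P* (zero duality gap for the augmented Lagrangian). -/
open Filter Topology

/-- The augmented Lagrangian `L_ρ(x, λ, ν)`. -/
noncomputable def augLag {X ι κ : Type*} [Fintype ι] [Fintype κ]
    (f : X → ℝ) (c : X → ι → ℝ) (G Ψ : X → κ → ℝ)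
    (ρ : ℝ) (x : X) (lam : ι → ℝ) (nu : κ → ℝ) : ℝ :=
  f x - ∑ i, lam i * c x i - ∑ k, (nu k * G x k + ρ / 2 * Ψ x k)

/-- The augmented dual function `d_ρ(λ, ν) = sSup {L_ρ(x, λ, ν) | x : X}`. -/
noncomputable def augDual {X ι κ : Type*} [Fintype ι] [Fintype κ]
    (f : X → ℝ) (c : X → ι → ℝ) (G Ψ : X → κ → ℝ)
    (ρ : ℝ) (lam : ι → ℝ) (nu : κ → ℝ) : ℝ :=
  sSup {y : ℝ | ∃ x : X, y = augLag f c G Ψ ρ x lam nu}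

/-- Feasibility: all cumulative costs nonpositive and all instantaneous constraints met. -/
def Feasible {X ι κ : Type*} (c : X → ι → ℝ) (G : X → κ → ℝ) (x : X) : Prop :=
  (∀ i, c x i ≤ 0) ∧ ∀ k, G x k = 0

/-- The primal optimal value `P*`: supremum of `f` over the feasible set. -/
noncomputable def primalValue {X ι κ : Type*}
    (f : X → ℝ) (c : X → ι → ℝ) (G : X → κ → ℝ) : ℝ :=
  sSup (f '' {x : X | Feasible c G x})

/-- Lemma 1 of the paper: zero duality gap for the augmented
Lagrangian, given strong duality for the standard Lagrangian. -/
theorem augmented_zero_duality_gap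
    {X : Type*} [Nonempty X] {ι κ : Type*} [Fintype ι] [Fintype κ]
    (f : X → ℝ) (c : X → ι → ℝ) (G Ψ : X → κ → ℝ)
    (Bf : ℝ) (hBf : ∀ x, |f x| ≤ Bf)
    (Bc : ℝ) (hBc : ∀ x i, |c x i| ≤ Bc)
    (BG : ℝ) (hBG : ∀ x k, |G x k| ≤ BG)
    (BΨ : ℝ) (hBΨ : ∀ x k, |Ψ x k| ≤ BΨ)
    (hG : ∀ (x : X) (k : κ), 0 ≤ G x k) (hΨ : ∀ (x : X) (k : κ), 0 ≤ Ψ x k)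
    (hfeas : ∃ x : X, Feasible c G x)
    (hΨfeas : ∀ x : X, Feasible c G x → ∀ k, Ψ x k = 0)
    (hstrong :
      (⨅ p : {q : (ι → ℝ) × (κ → ℝ) // (∀ i, 0 ≤ q.1 i) ∧ ∀ k, 0 ≤ q.2 k},
          augDual f c G Ψ 0 p.1.1 p.1.2) = primalValue f c G) :
    ∀ ρ : ℝ, 0 ≤ ρ →
      (⨅ p : {q : (ι → ℝ) × (κ → ℝ) // (∀ i, 0 ≤ q.1 i) ∧ ∀ k, 0 ≤ q.2 k},
          augDual f c G Ψ ρ p.1.1 p.1.2) = primalValue f c G := by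

  intro ρ hρ
  have hBfΨ : ∀ x k, Ψ x k ≤ BΨ := fun x k => (abs_le.mp (hBΨ x k)).2
  -- bounded above of each Lagrangian range
  have key : ∀ (ρ' : ℝ), 0 ≤ ρ' → ∀ lam nu,
      BddAbove {y : ℝ | ∃ x : X, y = augLag f c G Ψ ρ' x lam nu} := by
    intro ρ' hρ' lam nu
    refine ⟨Bf + ∑ i : ι, |lam i| * Bc + ∑ k : κ, (|nu k| * BG + ρ' / 2 * BΨ), ?_⟩
    rintro y ⟨x, rfl⟩
    unfold augLag
    have h1 : f x ≤ Bf := (abs_le.mp (hBf x)).2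
    have h2 : -∑ i, lam i * c x i ≤ ∑ i : ι, |lam i| * Bc := by
      rw [← Finset.sum_neg_distrib]
      apply Finset.sum_le_sum
      intro i _
      calc -(lam i * c x i) ≤ |lam i * c x i| := neg_le_abs _
        _ = |lam i| * |c x i| := abs_mul _ _
        _ ≤ |lam i| * Bc := mul_le_mul_of_nonneg_left (hBc x i) (abs_nonneg _)
    have h3 : -∑ k, (nu k * G x k + ρ' / 2 * Ψ x k)
        ≤ ∑ k : κ, (|nu k| * BG + ρ' / 2 * BΨ) := by
      rw [← Finset.sum_neg_distrib]
      apply Finset.sum_le_sum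
      intro k _
      have hA : -(nu k * G x k) ≤ |nu k| * BG := by
        calc -(nu k * G x k) ≤ |nu k * G x k| := neg_le_abs _
          _ = |nu k| * |G x k| := abs_mul _ _
          _ ≤ |nu k| * BG := mul_le_mul_of_nonneg_left (hBG x k) (abs_nonneg _)
      have hB : -(ρ' / 2 * Ψ x k) ≤ ρ' / 2 * BΨ := by
        have : 0 ≤ ρ' / 2 * Ψ x k := mul_nonneg (by linarith) (hΨ x k)
        have hBΨ0 : 0 ≤ BΨ := le_trans (abs_nonneg _) (hBΨ x k)
        nlinarith
      linarith [hA, hB]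
    linarith
  have hne : ∀ (ρ' : ℝ) lam nu,
      {y : ℝ | ∃ x : X, y = augLag f c G Ψ ρ' x lam nu}.Nonempty := by
    intro ρ' lam nu
    obtain ⟨x⟩ := ‹Nonempty X›
    exact ⟨_, x, rfl⟩
  -- weak duality: P* ≤ d_ρ(λ,ν) for λ,ν ≥ 0
  have hPle : ∀ lam nu, (∀ i, 0 ≤ lam i) → (∀ k, 0 ≤ nu k) →
      primalValue f c G ≤ augDual f c G Ψ ρ lam nu := by
    intro lam nu hlam hnu
    have himg : (f '' {x : X | Feasible c G x}).Nonempty := by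
      obtain ⟨x, hx⟩ := hfeas
      exact ⟨f x, x, hx, rfl⟩
    apply csSup_le himg
    rintro y ⟨x, hx, rfl⟩
    have hfx : f x ≤ augLag f c G Ψ ρ x lam nu := by
      unfold augLag
      have h1 : ∑ i, lam i * c x i ≤ 0 :=
        Finset.sum_nonpos fun i _ => mul_nonpos_of_nonneg_of_nonpos (hlam i) (hx.1 i)
      have h2 : ∑ k, (nu k * G x k + ρ / 2 * Ψ x k) = 0 := by
        apply Finset.sum_eq_zero
        intro k _
        rw [hx.2 k, hΨfeas x hx k]
        ring
      linarith
    exact hfx.trans (le_csSup (key ρ hρ lam nu) ⟨x, rfl⟩)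
  have hmono : ∀ lam nu, augDual f c G Ψ ρ lam nu ≤ augDual f c G Ψ 0 lam nu := by
    intro lam nu
    apply csSup_le (hne ρ lam nu)
    rintro y ⟨x, rfl⟩
    have hle : augLag f c G Ψ ρ x lam nu ≤ augLag f c G Ψ 0 x lam nu := by
      unfold augLag
      have : ∑ k, (nu k * G x k + (0:ℝ) / 2 * Ψ x k)
          ≤ ∑ k, (nu k * G x k + ρ / 2 * Ψ x k) := by
        apply Finset.sum_le_sum
        intro k _
        have : 0 ≤ ρ / 2 * Ψ x k := mul_nonneg (by linarith) (hΨ x k)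
        nlinarith
      linarith
    exact hle.trans (le_csSup (key 0 le_rfl lam nu) ⟨x, rfl⟩)
  haveI : Nonempty {q : (ι → ℝ) × (κ → ℝ) // (∀ i, 0 ≤ q.1 i) ∧ ∀ k, 0 ≤ q.2 k} :=
    ⟨⟨(0, 0), fun _ => le_rfl, fun _ => le_rfl⟩⟩
  have hbdd : BddBelow (Set.range fun p :
      {q : (ι → ℝ) × (κ → ℝ) // (∀ i, 0 ≤ q.1 i) ∧ ∀ k, 0 ≤ q.2 k} =>
      augDual f c G Ψ ρ p.1.1 p.1.2) := by
    refine ⟨primalValue f c G, ?_⟩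
    rintro y ⟨p, rfl⟩
    exact hPle _ _ p.2.1 p.2.2
  apply le_antisymm
  · calc (⨅ p : {q : (ι → ℝ) × (κ → ℝ) // (∀ i, 0 ≤ q.1 i) ∧ ∀ k, 0 ≤ q.2 k},
        augDual f c G Ψ ρ p.1.1 p.1.2)
        ≤ ⨅ p : {q : (ι → ℝ) × (κ → ℝ) // (∀ i, 0 ≤ q.1 i) ∧ ∀ k, 0 ≤ q.2 k},
          augDual f c G Ψ 0 p.1.1 p.1.2 := ciInf_mono hbdd fun p => hmono _ _
      _ = primalValue f c G := hstrong
  · exact le_ciInf fun p => hPle _ _ p.2.1 p.2.2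
end

section
/- Let B > 0 bound the data: |f x| ≤ B, |c x i| ≤ B, and |G x k| ≤ B for all x, i, k. Suppose ρ ≥ 0, λ : ι → ℝ with λ i ≥ 0, ν : κ → ℝ with ν k ≥ 0, and x_ρ : X satisfy L_ρ(x_ρ, λ, ν) = P*. Then the total quadratic penalty obeys the explicit bound (ρ/2) * ∑ k, Ψ x_ρ k ≤ B * (1 + ∑ i, λ i + ∑ k, ν k) − P*. -/
open Filter Topology

/-- key estimate, Case 2 in the proof of Theorem 1: explicit
bound on the total quadratic penalty at an augmented-Lagrangian optimizer. -/
theorem quadratic_penalty_bound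
    {X : Type*} [Nonempty X] {ι κ : Type*} [Fintype ι] [Fintype κ]
    (f : X → ℝ) (c : X → ι → ℝ) (G Ψ : X → κ → ℝ)
    (B : ℝ) (hB : 0 < B)
    (hBf : ∀ x, |f x| ≤ B)
    (hBc : ∀ x i, |c x i| ≤ B)
    (hBG : ∀ x k, |G x k| ≤ B)
    (hG : ∀ (x : X) (k : κ), 0 ≤ G x k) (hΨ : ∀ (x : X) (k : κ), 0 ≤ Ψ x k)
    (hfeas : ∃ x : X, Feasible c G x)
    (ρ : ℝ) (hρ : 0 ≤ ρ)
    (lam : ι → ℝ) (hlam : ∀ i, 0 ≤ lam i)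
    (nu : κ → ℝ) (hnu : ∀ k, 0 ≤ nu k)
    (xρ : X) (hopt : augLag f c G Ψ ρ xρ lam nu = primalValue f c G) :
    ρ / 2 * ∑ k, Ψ xρ k ≤
      B * (1 + ∑ i, lam i + ∑ k, nu k) - primalValue f c G := by
  have h := hopt
  unfold augLag at h
  rw [Finset.sum_add_distrib, ← Finset.mul_sum] at h
  have h1 : f xρ ≤ B := (abs_le.mp (hBf xρ)).2
  have h2 : ∑ i, lam i * (-B) ≤ ∑ i, lam i * c xρ i :=
    Finset.sum_le_sum fun i _ =>
      mul_le_mul_of_nonneg_left (neg_le_of_abs_le (hBc xρ i)) (hlam i)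
  have h3 : 0 ≤ ∑ k, nu k * G xρ k :=
    Finset.sum_nonneg fun k _ => mul_nonneg (hnu k) (hG xρ k)
  have h4 : 0 ≤ ∑ k, nu k := Finset.sum_nonneg fun k _ => hnu k
  have h5 : 0 ≤ B * ∑ k, nu k := mul_nonneg hB.le h4
  have h2' : ∑ i, lam i * (-B) = -(B * ∑ i, lam i) := by
    rw [← Finset.sum_mul]; ring
  nlinarith [h, h2' ▸ h2]
end

section
/- Let X be a nonempty type, f : X → ℝ with |f x| ≤ B for all x and some B > 0, and c : X → ℝ. Assume there exists x₀ : X with c x₀ ≤ 0 (a feasible point, guaranteed by Slater's condition). Let (λ s)_{s : ℕ} be a sequence of nonnegative reals with λ s → ∞, and for each s let x_s : X maximize the penalized objective, i.e., f y − λ s * c y ≤ f (x_s) − λ s * c (x_s) for all y : X. Then liminf_{s → ∞} c (x_s) ≤ 0. -/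
/-- as the dual variable diverges, the maximizers of the
penalized objective asymptotically satisfy the cumulative constraint. -/
theorem penalized_maximizers_liminf_feasible
    {X : Type*} [Nonempty X]
    (f : X → ℝ) (B : ℝ) (hB : 0 < B) (hBf : ∀ x, |f x| ≤ B)
    (c : X → ℝ)
    (x₀ : X) (hx₀ : c x₀ ≤ 0)
    (lam : ℕ → ℝ) (hlam : ∀ s, 0 ≤ lam s)
    (hlamdiv : Filter.Tendsto lam Filter.atTop Filter.atTop)
    (x : ℕ → X)
    (hmax : ∀ (s : ℕ) (y : X), f y - lam s * c y ≤ f (x s) - lam s * c (x s)) :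
    Filter.liminf (fun s => c (x s)) Filter.atTop ≤ 0 := by
  -- key bound: for lam s > 0, c (x s) ≤ 2B / lam s
  have key : ∀ s, 0 < lam s → c (x s) ≤ 2 * B / lam s := by
    intro s hs
    have h1 := hmax s x₀
    have h2 : lam s * c (x s) ≤ 2 * B := by
      have hfx : f (x s) ≤ B := (abs_le.mp (hBf (x s))).2
      have hfx0 : -B ≤ f x₀ := (abs_le.mp (hBf x₀)).1
      have hcx0 : lam s * c x₀ ≤ 0 :=
        mul_nonpos_of_nonneg_of_nonpos (hlam s) hx₀
      nlinarith
    rw [le_div_iff₀ hs]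
    linarith [h2]
  rw [Filter.liminf_eq]
  apply Real.sSup_le _ le_rfl
  intro a ha
  simp only [Set.mem_setOf_eq] at ha
  by_contra hpos
  push_neg at hpos
  -- eventually lam s is large, so c (x s) < a, contradicting a ≤ c (x s)
  have hev : ∀ᶠ s in Filter.atTop, 2 * B / a + 1 ≤ lam s :=
    hlamdiv.eventually_ge_atTop _
  have := (ha.and hev).exists
  obtain ⟨s, has, hls⟩ := this
  have hlpos : 0 < lam s := by
    have : 0 < 2 * B / a := by positivity
    linarith
  have h1 : c (x s) ≤ 2 * B / lam s := key s hlpos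
  have h2 : 2 * B / lam s < a := by
    rw [div_lt_iff₀ hlpos]
    have h3 : 2 * B / a < lam s := by linarith
    have : 2 * B = (2 * B / a) * a := by field_simp
    rw [this]
    calc (2 * B / a) * a < lam s * a := mul_lt_mul_of_pos_right h3 hpos
    _ = a * lam s := mul_comm _ _
  linarith
end

section
/- Let X be a nonempty type, f : X → ℝ with |f x| ≤ B for all x and some B > 0, and c : X → ℝ. Assume there exists x₀ : X with c x₀ ≤ 0. Let (β s)_{s : ℕ} be nonnegative reals with divergent series ∑ β s = ∞. Suppose (λ s) and (x_s) are generated by the primal–dual scheme: λ 0 ≥ 0, λ (s+1) = max 0 (λ s + β s * c (x_s)), and each x_s maximizes y ↦ f y − λ s * c y over X. Then liminf_{s → ∞} c (x_s) ≤ 0 (cumulative constraint satisfaction along a subsequence). -/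
/-- Theorem 2 of the paper, Cumulative Constraint Satisfaction:
the primal–dual scheme with projected dual ascent and divergent step sizes
forces the policy sequence to satisfy the cumulative constraint along a
subsequence. -/
theorem cumulative_constraint_satisfaction
    {X : Type*} [Nonempty X]
    (f : X → ℝ) (B : ℝ) (hB : 0 < B) (hBf : ∀ x, |f x| ≤ B)
    (c : X → ℝ)
    (x₀ : X) (hx₀ : c x₀ ≤ 0)
    (β : ℕ → ℝ) (hβ : ∀ s, 0 ≤ β s)
    (hβdiv : Filter.Tendsto (fun n => ∑ s ∈ Finset.range n, β s)
      Filter.atTop Filter.atTop)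
    (lam : ℕ → ℝ) (x : ℕ → X)
    (hlam0 : 0 ≤ lam 0)
    (hrec : ∀ s, lam (s + 1) = max 0 (lam s + β s * c (x s)))
    (hmax : ∀ (s : ℕ) (y : X), f y - lam s * c y ≤ f (x s) - lam s * c (x s)) :
    Filter.liminf (fun s => c (x s)) Filter.atTop ≤ 0 := by
  have hlamnn : ∀ s, 0 ≤ lam s := by
    intro s
    cases s with
    | zero => exact hlam0
    | succ n => rw [hrec n]; exact le_max_left _ _
  -- key uniform bound: lam s * c (x s) ≤ 2B
  have hkey : ∀ s, lam s * c (x s) ≤ 2 * B := by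
    intro s
    have h1 := hmax s x₀
    have h2 : lam s * c x₀ ≤ 0 := mul_nonpos_of_nonneg_of_nonpos (hlamnn s) hx₀
    have h3 : |f (x s)| ≤ B := hBf _
    have h4 : |f x₀| ≤ B := hBf _
    have := abs_le.mp h3
    have := abs_le.mp h4
    nlinarith
  rw [Filter.liminf_eq]
  apply Real.sSup_le _ le_rfl
  intro a ha
  simp only [Filter.eventually_atTop, Set.mem_setOf_eq] at ha
  obtain ⟨N, hN⟩ := ha
  by_contra hpos
  push_neg at hpos
  -- lam grows at least linearly in the partial sums of β after N
  have hgrow : ∀ k, lam N + a * ∑ i ∈ Finset.range k, β (N + i) ≤ lam (N + k) := by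
    intro k
    induction k with
    | zero => simp
    | succ k ih =>
      have hc : a ≤ c (x (N + k)) := hN _ (Nat.le_add_right _ _)
      have hb := hβ (N + k)
      have : lam (N + k) + β (N + k) * a ≤ lam (N + k + 1) := by
        rw [hrec (N + k)]
        have : β (N + k) * a ≤ β (N + k) * c (x (N + k)) :=
          mul_le_mul_of_nonneg_left hc hb
        exact le_trans (by linarith) (le_max_right _ _)
      rw [Finset.sum_range_succ]
      calc lam N + a * (∑ i ∈ Finset.range k, β (N + i) + β (N + k))
          = (lam N + a * ∑ i ∈ Finset.range k, β (N + i)) + a * β (N + k) := by ring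
        _ ≤ lam (N + k) + β (N + k) * a := by linarith [mul_comm a (β (N + k))]
        _ ≤ lam (N + k + 1) := this
  -- the sum ∑_{i<k} β (N+i) tends to infinity
  have hsum : Filter.Tendsto (fun k => ∑ i ∈ Finset.range k, β (N + i))
      Filter.atTop Filter.atTop := by
    have h1 : Filter.Tendsto (fun k => ∑ s ∈ Finset.range (N + k), β s)
        Filter.atTop Filter.atTop :=
      hβdiv.comp (Filter.tendsto_atTop_mono (fun k => Nat.le_add_left k N) Filter.tendsto_id)
    have h2 : ∀ k, ∑ i ∈ Finset.range k, β (N + i)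
        = ∑ s ∈ Finset.range (N + k), β s - ∑ s ∈ Finset.range N, β s := by
      intro k
      rw [Finset.sum_range_add]
      ring
    simp only [h2]
    exact h1.atTop_add tendsto_const_nhds
  -- hence lam (N + k) → ∞
  have hlamdiv : Filter.Tendsto (fun k => lam (N + k)) Filter.atTop Filter.atTop := by
    apply Filter.tendsto_atTop_mono hgrow
    apply Filter.tendsto_atTop_add_const_left
    exact (Filter.tendsto_const_mul_atTop_of_pos hpos).mpr hsum
  obtain ⟨k, hk⟩ := (hlamdiv.eventually_gt_atTop (2 * B / a)).exists
  have hc : a ≤ c (x (N + k)) := hN _ (Nat.le_add_right _ _)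
  have h1 : lam (N + k) * a ≤ lam (N + k) * c (x (N + k)) :=
    mul_le_mul_of_nonneg_left hc (hlamnn _)
  have h2 := hkey (N + k)
  have h3 : 2 * B < lam (N + k) * a := by
    rw [div_lt_iff₀ hpos] at hk
    linarith
  linarith
end
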